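/- Let F = {f₁,…,f_k} be an IFS of similarities on ℝ^d (no open set condition assumed) with factors c_i ∈ (0,1) and attractor K of positive diameter. Then dim_H(K) ≤ dim³(K) = s, where s is the unique solution of ∑_i c_i^s = 1 and dim³ is the fractal dimension III with respect to the natural fractal structure of K. -/

import Mathlib

open Metric Set Filter Topology MeasureTheory ENNReal NNReal

noncomputable section

/-- A map is a similarity with factor `c` if it scales all distances exactly by `c`. -/
def IsSimilarity {X : Type*} [MetricSpace X] (f : X → X) (c : ℝ) : Prop :=
  ∀ x y, dist (f x) (f y) = c * dist x y

/-- Composition `f_{ω₁} ∘ ⋯ ∘ f_{ω_n}` of the maps of an IFS along a word `ω`. -/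
def wordComp {X : Type*} {k : ℕ} (f : Fin k → X → X) {n : ℕ} (ω : Fin n → Fin k) : X → X :=
  (List.ofFn fun i => f (ω i)).foldr (· ∘ ·) id

/-- Number of elements of level `Γ_n` of the natural fractal structure (counted with
multiplicity over words) that meet `K`. -/
def levelCount {X : Type*} [MetricSpace X] {k : ℕ} (f : Fin k → X → X) (K : Set X)
    (n : ℕ) : ℕ :=
  Set.ncard {ω : Fin n → Fin k | ((wordComp f ω '' K) ∩ K).Nonempty}

/-- `δ(K, Γ_n)`: supremum of diameters of the elements of level `Γ_n` meeting `K`. -/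
def deltaLevel {X : Type*} [MetricSpace X] {k : ℕ} (f : Fin k → X → X) (K : Set X)
    (n : ℕ) : ℝ :=
  sSup {d : ℝ | ∃ ω : Fin n → Fin k, ((wordComp f ω '' K) ∩ K).Nonempty ∧
    d = Metric.diam (wordComp f ω '' K)}

/-- `N_δ(K)`: the largest number of disjoint closed balls of radius `δ` with centres in `K`. -/
def packingNum {X : Type*} [MetricSpace X] (K : Set X) (δ : ℝ) : ℕ :=
  sSup {m : ℕ | ∃ t : Finset X, t.card = m ∧ ↑t ⊆ K ∧
    (t : Set X).Pairwise fun x y => Disjoint (Metric.closedBall x δ) (Metric.closedBall y δ)}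

/-- The pre-measure `H^s_{n,3}(K)`: infimum over whole levels `m ≥ n` of the sum of the
`s`-th powers of the diameters of all elements of that level (with multiplicity). -/
def H3pre {X : Type*} [MetricSpace X] {k : ℕ} (f : Fin k → X → X) (K : Set X)
    (s : ℝ) (n : ℕ) : ℝ≥0∞ :=
  ⨅ m : {m : ℕ // n ≤ m}, ∑ ω : Fin m.1 → Fin k,
    ENNReal.ofReal (Metric.diam (wordComp f ω '' K)) ^ s

/-- `H^s_3(K)`: the (monotone) limit of `H^s_{n,3}(K)` as `n → ∞`. -/
def H3 {X : Type*} [MetricSpace X] {k : ℕ} (f : Fin k → X → X) (K : Set X) (s : ℝ) : ℝ≥0∞ :=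
  ⨆ n : ℕ, H3pre f K s n

/-- `H^s_4(K)`: limit over `n` of the infimum over finite covers of `K` by elements of
levels `≥ n` of the natural fractal structure. -/
def H4 {X : Type*} [MetricSpace X] {k : ℕ} (f : Fin k → X → X) (K : Set X) (s : ℝ) : ℝ≥0∞ :=
  ⨆ n : ℕ, ⨅ (𝒜 : Set (Set X)) (_ : 𝒜.Finite ∧
      (∀ A ∈ 𝒜, ∃ m, n ≤ m ∧ ∃ ω : Fin m → Fin k, A = wordComp f ω '' K) ∧ K ⊆ ⋃₀ 𝒜),
    ∑' A : 𝒜, ENNReal.ofReal (Metric.diam (A : Set X)) ^ s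

/-- `H^s_5(K)`: limit over `n` of the infimum over countable covers of `K` by elements of
levels `≥ n` of the natural fractal structure. -/
def H5 {X : Type*} [MetricSpace X] {k : ℕ} (f : Fin k → X → X) (K : Set X) (s : ℝ) : ℝ≥0∞ :=
  ⨆ n : ℕ, ⨅ (𝒜 : Set (Set X)) (_ : 𝒜.Countable ∧
      (∀ A ∈ 𝒜, ∃ m, n ≤ m ∧ ∃ ω : Fin m → Fin k, A = wordComp f ω '' K) ∧ K ⊆ ⋃₀ 𝒜),
    ∑' A : 𝒜, ENNReal.ofReal (Metric.diam (A : Set X)) ^ s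

/-- `H^s_6(K)`: limit as `δ → 0` of the infimum over countable covers of `K` by
fractal-structure elements of diameter at most `δ`. -/
def H6 {X : Type*} [MetricSpace X] {k : ℕ} (f : Fin k → X → X) (K : Set X) (s : ℝ) : ℝ≥0∞ :=
  ⨆ (δ : ℝ) (_ : 0 < δ), ⨅ (𝒜 : Set (Set X)) (_ : 𝒜.Countable ∧
      (∀ A ∈ 𝒜, (∃ m, ∃ ω : Fin m → Fin k, A = wordComp f ω '' K) ∧ Metric.diam A ≤ δ) ∧
      K ⊆ ⋃₀ 𝒜),
    ∑' A : 𝒜, ENNReal.ofReal (Metric.diam (A : Set X)) ^ s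

/-- The open set condition for a family of self-maps of `ℝ^d`. -/
def OSC {d k : ℕ} (f : Fin k → EuclideanSpace ℝ (Fin d) → EuclideanSpace ℝ (Fin d)) : Prop :=
  ∃ V : Set (EuclideanSpace ℝ (Fin d)), V.Nonempty ∧ IsOpen V ∧ Bornology.IsBounded V ∧
    (∀ i, f i '' V ⊆ V) ∧ Pairwise fun i j => Disjoint (f i '' V) (f j '' V)

/-! A word `ω` of length `m` gives a similarity of ratio `∏ c (ω i)`, so the `t`-sum of the
diameters of level `m` is exactly `(∑ cᵢ ^ t) ^ m * diam K ^ t`. Hence `H3 f K t = 0` when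
`∑ cᵢ ^ t < 1`, i.e. `s < t`, while `H3 f K t ≥ diam K ^ t > 0` when `t ≤ s`. The levels are
covers of `K` whose mesh tends to `0`, so `μH[t] K ≤ H3 f K t`, which bounds `dimH K` by `s`. -/

namespace IsSimilarity

variable {X : Type*} [MetricSpace X] {g h : X → X} {r r' : ℝ}

lemma comp (hg : IsSimilarity g r) (hh : IsSimilarity h r') : IsSimilarity (g ∘ h) (r * r') :=
  fun x y => by rw [Function.comp_apply, Function.comp_apply, hg, hh, mul_assoc]

lemma ediam_image (hg : IsSimilarity g r) (hr : 0 ≤ r) (A : Set X) :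
    ediam (g '' A) = ENNReal.ofReal r * ediam A := by
  have hedist : ∀ x y, edist (g x) (g y) = ENNReal.ofReal r * edist x y := fun x y => by
    rw [edist_dist, edist_dist, hg, ENNReal.ofReal_mul hr]
  simp only [ediam, iSup_image, hedist, ENNReal.mul_iSup]

lemma diam_image (hg : IsSimilarity g r) (hr : 0 ≤ r) (A : Set X) :
    diam (g '' A) = r * diam A := by
  rw [diam, diam, hg.ediam_image hr, ENNReal.toReal_mul, ENNReal.toReal_ofReal hr]

end IsSimilarity

section Words

variable {X : Type*} {k : ℕ} {f : Fin k → X → X}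

lemma wordComp_succ (f : Fin k → X → X) {n : ℕ} (ω : Fin (n + 1) → Fin k) :
    wordComp f ω = f (ω 0) ∘ wordComp f (Fin.tail ω) := by
  simp [wordComp, List.ofFn_succ, Fin.tail]

lemma subset_iUnion_wordComp_image {K : Set X} (hK : K ⊆ ⋃ i, f i '' K) :
    ∀ n, K ⊆ ⋃ ω : Fin n → Fin k, wordComp f ω '' K
  | 0 => fun x hx => mem_iUnion.2 ⟨Fin.elim0, x, hx, rfl⟩
  | n + 1 => fun x hx => by
    obtain ⟨i, y, hy, rfl⟩ := mem_iUnion.1 (hK hx)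
    obtain ⟨ω, z, hz, rfl⟩ := mem_iUnion.1 (subset_iUnion_wordComp_image hK n hy)
    refine mem_iUnion.2 ⟨Fin.cons i ω, z, hz, ?_⟩
    simp [wordComp_succ]

variable [MetricSpace X] {c : Fin k → ℝ}

lemma isSimilarity_wordComp (hf : ∀ i, IsSimilarity (f i) (c i)) :
    ∀ {n : ℕ} (ω : Fin n → Fin k), IsSimilarity (wordComp f ω) (∏ i, c (ω i))
  | 0, _ => fun x y => by simp [wordComp]
  | _ + 1, ω => by
    rw [wordComp_succ, Fin.prod_univ_succ]
    exact (hf (ω 0)).comp (isSimilarity_wordComp hf (Fin.tail ω))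

lemma sum_ofReal_diam_wordComp_image_rpow (hc : ∀ i, 0 < c i)
    (hf : ∀ i, IsSimilarity (f i) (c i)) {K : Set X} (hK : 0 < diam K) (t : ℝ) (n : ℕ) :
    ∑ ω : Fin n → Fin k, ENNReal.ofReal (diam (wordComp f ω '' K)) ^ t
      = ENNReal.ofReal ((∑ i, c i ^ t) ^ n * diam K ^ t) := by
  have hterm : ∀ ω : Fin n → Fin k, ENNReal.ofReal (diam (wordComp f ω '' K)) ^ t
      = ENNReal.ofReal ((∏ i, c (ω i) ^ t) * diam K ^ t) := fun ω => by
    have hprod : 0 < ∏ i, c (ω i) := Finset.prod_pos fun i _ => hc (ω i)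
    rw [(isSimilarity_wordComp hf ω).diam_image hprod.le,
      ENNReal.ofReal_rpow_of_pos (mul_pos hprod hK), Real.mul_rpow hprod.le hK.le,
      Real.finsetProd_rpow _ _ fun i _ => (hc (ω i)).le]
  have hnonneg : ∀ i, 0 ≤ c i ^ t := fun i => Real.rpow_nonneg (hc i).le t
  rw [Fintype.sum_congr _ _ hterm, ← ENNReal.ofReal_sum_of_nonneg fun ω _ =>
      mul_nonneg (Finset.prod_nonneg fun i _ => hnonneg (ω i)) (Real.rpow_nonneg hK.le t),
    ← Finset.sum_mul, ← Fintype.sum_pow (fun i => c i ^ t)]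

end Words

lemma exists_mem_Ico_forall_le {ι : Type*} [Finite ι] {c : ι → ℝ} (hc : ∀ i, c i ∈ Ico 0 1) :
    ∃ b ∈ Ico (0 : ℝ) 1, ∀ i, c i ≤ b := by
  cases isEmpty_or_nonempty ι
  · exact ⟨0, ⟨le_rfl, one_pos⟩, isEmptyElim⟩
  · obtain ⟨i₀, hi₀⟩ := Finite.exists_max c
    exact ⟨c i₀, hc i₀, hi₀⟩

section MoranSum

variable {ι : Type*} [Fintype ι] {c : ι → ℝ} {s t : ℝ}

lemma sum_rpow_le_sum_rpow_of_le (hc : ∀ i, c i ∈ Ioo 0 1) (hst : s ≤ t) :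
    ∑ i, c i ^ t ≤ ∑ i, c i ^ s :=
  Finset.sum_le_sum fun i _ => Real.rpow_le_rpow_of_exponent_ge (hc i).1 (hc i).2.le hst

lemma sum_rpow_lt_sum_rpow_of_lt [Nonempty ι] (hc : ∀ i, c i ∈ Ioo 0 1) (hst : s < t) :
    ∑ i, c i ^ t < ∑ i, c i ^ s :=
  Finset.sum_lt_sum_of_nonempty Finset.univ_nonempty fun i _ =>
    Real.rpow_lt_rpow_of_exponent_gt (hc i).1 (hc i).2 hst

end MoranSum

section Dimension

variable {X : Type*} [MetricSpace X] {k : ℕ} {f : Fin k → X → X} {c : Fin k → ℝ} {K : Set X}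
  {t : ℝ}

lemma H3_eq_zero_of_sum_rpow_lt_one (hc : ∀ i, 0 < c i) (hf : ∀ i, IsSimilarity (f i) (c i))
    (hK : 0 < diam K) (ht : ∑ i, c i ^ t < 1) : H3 f K t = 0 := by
  have hlevel : Tendsto (fun m : ℕ => ENNReal.ofReal ((∑ i, c i ^ t) ^ m * diam K ^ t))
      atTop (𝓝 0) := by
    simpa using ENNReal.tendsto_ofReal <| (tendsto_pow_atTop_nhds_zero_of_lt_one
      (Finset.sum_nonneg fun i _ => Real.rpow_nonneg (hc i).le t) ht).mul_const (diam K ^ t)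
  refine ENNReal.iSup_eq_zero.2 fun n => le_zero_iff.1 <| ge_of_tendsto hlevel ?_
  filter_upwards [eventually_ge_atTop n] with m hm
  exact (iInf_le _ ⟨m, hm⟩).trans (sum_ofReal_diam_wordComp_image_rpow hc hf hK t m).le

lemma ofReal_diam_rpow_le_H3 (hc : ∀ i, 0 < c i) (hf : ∀ i, IsSimilarity (f i) (c i))
    (hK : 0 < diam K) (ht : 1 ≤ ∑ i, c i ^ t) : ENNReal.ofReal (diam K ^ t) ≤ H3 f K t := by
  refine le_trans (le_iInf fun m => ?_) (le_iSup (H3pre f K t) 0)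
  rw [sum_ofReal_diam_wordComp_image_rpow hc hf hK t m.1]
  exact ENNReal.ofReal_le_ofReal <|
    le_mul_of_one_le_left (Real.rpow_nonneg hK.le t) (one_le_pow₀ ht)

lemma hausdorffMeasure_le_H3 [MeasurableSpace X] [BorelSpace X] (hc : ∀ i, c i ∈ Ico 0 1)
    (hf : ∀ i, IsSimilarity (f i) (c i)) (hK : K ⊆ ⋃ i, f i '' K) (hKb : Bornology.IsBounded K)
    (t : ℝ) :
    μH[t] K ≤ H3 f K t := by
  obtain ⟨b, hb, hcb⟩ := exists_mem_Ico_forall_le hc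
  have hediam {m : ℕ} (ω : Fin m → Fin k) : ediam (wordComp f ω '' K)
      = ENNReal.ofReal (∏ i, c (ω i)) * ediam K :=
    (isSimilarity_wordComp hf ω).ediam_image (Finset.prod_nonneg fun i _ => (hc (ω i)).1) K
  have hsmall {m : ℕ} (ω : Fin m → Fin k) :
      ediam (wordComp f ω '' K) ≤ ENNReal.ofReal (b ^ m) * ediam K := by
    rw [hediam]
    gcongr
    simpa using Finset.prod_le_prod (s := Finset.univ) (fun i _ => (hc (ω i)).1)
      fun i _ => hcb (ω i)
  have hofReal {m : ℕ} (ω : Fin m → Fin k) :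
      ediam (wordComp f ω '' K) = ENNReal.ofReal (diam (wordComp f ω '' K)) :=
    (ENNReal.ofReal_toReal <| by
      simpa only [hediam] using ENNReal.mul_ne_top ENNReal.ofReal_ne_top hKb.ediam_ne_top).symm
  have hr : Tendsto (fun m : ℕ => ENNReal.ofReal (b ^ m) * ediam K) atTop (𝓝 0) := by
    simpa using ENNReal.Tendsto.mul_const
      (ENNReal.tendsto_ofReal (tendsto_pow_atTop_nhds_zero_of_lt_one hb.1 hb.2))
      (Or.inr hKb.ediam_ne_top)
  calc μH[t] K
      ≤ liminf (fun m : ℕ => ∑ ω : Fin m → Fin k, ediam (wordComp f ω '' K) ^ t) atTop :=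
        Measure.hausdorffMeasure_le_liminf_sum t K _ hr (fun m ω => wordComp f ω '' K)
          (Eventually.of_forall fun m => hsmall) (Eventually.of_forall
            (subset_iUnion_wordComp_image hK))
    _ = H3 f K t := by
        simp only [liminf_eq_iSup_iInf_of_nat, hofReal, H3, H3pre, iInf_subtype']

end Dimension

theorem dimH_le_dim3_eq_moran_root_general {d k : ℕ}
    (f : Fin k → EuclideanSpace ℝ (Fin d) → EuclideanSpace ℝ (Fin d))
    (c : Fin k → ℝ) (hc : ∀ i, c i ∈ Set.Ioo (0 : ℝ) 1)
    (hf : ∀ i, IsSimilarity (f i) (c i))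
    (K : Set (EuclideanSpace ℝ (Fin d)))
    (hK : K = ⋃ i, f i '' K) (hdiam : 0 < Metric.diam K)
    (s : ℝ) (hs : 0 ≤ s) (hsum : ∑ i, c i ^ s = 1) :
    dimH K ≤ ENNReal.ofReal s ∧ sInf {t : ℝ | 0 ≤ t ∧ H3 f K t = 0} = s := by
  have : Nonempty (Fin k) := Fin.pos_iff_nonempty.1 <| Nat.pos_of_ne_zero <| by
    rintro rfl
    simp at hsum
  have hc₀ : ∀ i, 0 < c i := fun i => (hc i).1
  have hH3 (t : ℝ) : H3 f K t = 0 ↔ s < t := by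
    refine ⟨fun h => not_le.1 fun hts => ?_,
      fun hst => H3_eq_zero_of_sum_rpow_lt_one hc₀ hf hdiam ?_⟩
    · have hpos := ofReal_diam_rpow_le_H3 hc₀ hf hdiam (hsum ▸ sum_rpow_le_sum_rpow_of_le hc hts)
      rw [h, nonpos_iff_eq_zero, ENNReal.ofReal_eq_zero] at hpos
      exact (Real.rpow_pos_of_pos hdiam t).not_ge hpos
    · exact hsum ▸ sum_rpow_lt_sum_rpow_of_lt hc hst
  refine ⟨dimH_le fun t ht => ?_, ?_⟩
  · have hKb : Bornology.IsBounded K := by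
      -- `diam` of an unbounded set is `0`
      by_contra h
      exact hdiam.ne' (diam_eq_zero_of_unbounded h)
    by_contra! hst
    have hμ := hausdorffMeasure_le_H3 (fun i => Ioo_subset_Ico_self (hc i)) hf hK.le hKb t
    rw [ht, (hH3 t).2 ((ENNReal.ofReal_lt_iff_lt_toReal hs ENNReal.coe_ne_top).1 hst)] at hμ
    exact ENNReal.top_ne_zero (nonpos_iff_eq_zero.1 hμ)
  · have hset : {t : ℝ | 0 ≤ t ∧ H3 f K t = 0} = Ioi s := by
      ext t
      simpa [hH3] using fun hst : s < t => hs.trans hst.le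
    rw [hset, csInf_Ioi]

/-- without the OSC, the Hausdorff dimension of the attractor is bounded by
the fractal dimension III, which equals the Moran root `s`. -/
theorem dimH_le_dim3_eq_moran_root {d k : ℕ}
    (f : Fin k → EuclideanSpace ℝ (Fin d) → EuclideanSpace ℝ (Fin d))
    (c : Fin k → ℝ) (hc : ∀ i, c i ∈ Set.Ioo (0 : ℝ) 1)
    (hf : ∀ i, IsSimilarity (f i) (c i))
    (K : Set (EuclideanSpace ℝ (Fin d))) (hne : K.Nonempty) (hcpt : IsCompact K)
    (hK : K = ⋃ i, f i '' K) (hdiam : 0 < Metric.diam K)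
    (s : ℝ) (hs : 0 ≤ s) (hsum : ∑ i, c i ^ s = 1) :
    dimH K ≤ ENNReal.ofReal s ∧ sInf {t : ℝ | 0 ≤ t ∧ H3 f K t = 0} = s :=
  dimH_le_dim3_eq_moran_root_general f c hc hf K hK hdiam s hs hsum
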